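/- If the Thurston algorithm pull-back step has a fixed point, the corresponding map realizes the combinatorics: let f = F(c,v,φ) have branches f₀, f₁, and suppose the shadow orbits x_k(0),…,x_k(m-1) (k = 0,1) satisfy x_k(0) = k, x_k(m-1) = c, v = (x₀(1), x₁(1)), and x_k(j-1) = f⁻¹_{ā_k(j)}(x_k(j)) for j = 1,…,m-1, where ā_k is the concatenation of w_k followed by w_{1-k}. Then f^j(k) = x_k(j) for j = 0,…,m-1; in particular f^{m-1}(0) = f^{m-1}(1) = c. -/

import Mathlib

open Set

theorem Function.iterate_apply_eq_of_forall_lt {α : Type*} (f : α → α) (x : ℕ → α) (n : ℕ)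
    (hx : ∀ j < n, f (x j) = x (j + 1)) : ∀ j ≤ n, f^[j] (x 0) = x j := by
  intro j hj
  induction j with
  | zero => rfl
  | succ j ih =>
    rw [Function.iterate_succ_apply', ih (Nat.le_of_succ_le hj), hx j hj]

theorem apply_eq_of_branch_step {α β : Type*} {A B : Set α} {f f₀ f₁ : α → β}
    (hf₀ : EqOn f f₀ A) (hf₁ : EqOn f f₁ B) (b : Bool) {y : α} {z : β}
    (hstep : if b = false then y ∈ A ∧ z = f₀ y else y ∈ B ∧ z = f₁ y) : f y = z := by
  split_ifs at hstep
  · exact (hf₀ hstep.1).trans hstep.2.symm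
  · exact (hf₁ hstep.1).trans hstep.2.symm

theorem thurston_fixed_point_realizes_combinatorics_general
    (c : ℝ)
    (f f₀ f₁ : ℝ → ℝ)
    (hfl : ∀ x ∈ Ico (0:ℝ) c, f x = f₀ x)
    (hfr : ∀ x ∈ Ioc c 1, f x = f₁ x)
    (w₀ w₁ : List Bool) (m : ℕ)
    (x₀ x₁ : ℕ → ℝ)
    (hx₀0 : x₀ 0 = 0) (hx₁0 : x₁ 0 = 1)
    (hx₀last : x₀ (m - 1) = c) (hx₁last : x₁ (m - 1) = c)
    -- the pull-back fixed point equations, in forward form, for k = 0: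
    (hpull₀ : ∀ j < m - 1,
      (if (w₀ ++ w₁).getD j false = false
        then x₀ j ∈ Ico (0:ℝ) c ∧ x₀ (j + 1) = f₀ (x₀ j)
        else x₀ j ∈ Ioc c 1 ∧ x₀ (j + 1) = f₁ (x₀ j)))
    -- and for k = 1:
    (hpull₁ : ∀ j < m - 1,
      (if (w₁ ++ w₀).getD j false = false
        then x₁ j ∈ Ico (0:ℝ) c ∧ x₁ (j + 1) = f₀ (x₁ j)
        else x₁ j ∈ Ioc c 1 ∧ x₁ (j + 1) = f₁ (x₁ j))) :
    (∀ j ≤ m - 1, f^[j] 0 = x₀ j) ∧ (∀ j ≤ m - 1, f^[j] 1 = x₁ j) ∧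
    f^[m - 1] 0 = c ∧ f^[m - 1] 1 = c := by
  have orbit₀ : ∀ j ≤ m - 1, f^[j] 0 = x₀ j := hx₀0 ▸
    Function.iterate_apply_eq_of_forall_lt f x₀ (m - 1) fun j hj =>
      apply_eq_of_branch_step hfl hfr _ (hpull₀ j hj)
  have orbit₁ : ∀ j ≤ m - 1, f^[j] 1 = x₁ j := hx₁0 ▸
    Function.iterate_apply_eq_of_forall_lt f x₁ (m - 1) fun j hj =>
      apply_eq_of_branch_step hfl hfr _ (hpull₁ j hj)
  exact ⟨orbit₀, orbit₁, (orbit₀ _ le_rfl).trans hx₀last, (orbit₁ _ le_rfl).trans hx₁last⟩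

/-- a fixed point of the Thurston pull-back step realizes the
combinatorics: if the shadow orbits satisfy the pull-back equations (stated
equivalently in forward form, with each point lying in the domain of the
branch dictated by the word `ā_k = w_k · w_{1-k}`), then the shadow orbits
are genuine orbits of the critical values: `f^j(k) = x_k(j)`, and in
particular `f^{m-1}(0) = f^{m-1}(1) = c`. -/
theorem thurston_fixed_point_realizes_combinatorics
    (c v₀ v₁ : ℝ) (hc : c ∈ Ioo (0:ℝ) 1)
    (f f₀ f₁ : ℝ → ℝ)
    (hfl : ∀ x ∈ Ico (0:ℝ) c, f x = f₀ x)
    (hfr : ∀ x ∈ Ioc c 1, f x = f₁ x)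
    (w₀ w₁ : List Bool) (m : ℕ) (hm : m = w₀.length + w₁.length)
    (hm2 : 2 ≤ m)
    (x₀ x₁ : ℕ → ℝ)
    (hx₀0 : x₀ 0 = 0) (hx₁0 : x₁ 0 = 1)
    (hx₀last : x₀ (m - 1) = c) (hx₁last : x₁ (m - 1) = c)
    (hv₀ : v₀ = x₀ 1) (hv₁ : v₁ = x₁ 1)
    -- the pull-back fixed point equations, in forward form, for k = 0:
    (hpull₀ : ∀ j < m - 1,
      (if (w₀ ++ w₁).getD j false = false
        then x₀ j ∈ Ico (0:ℝ) c ∧ x₀ (j + 1) = f₀ (x₀ j)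
        else x₀ j ∈ Ioc c 1 ∧ x₀ (j + 1) = f₁ (x₀ j)))
    -- and for k = 1:
    (hpull₁ : ∀ j < m - 1,
      (if (w₁ ++ w₀).getD j false = false
        then x₁ j ∈ Ico (0:ℝ) c ∧ x₁ (j + 1) = f₀ (x₁ j)
        else x₁ j ∈ Ioc c 1 ∧ x₁ (j + 1) = f₁ (x₁ j))) :
    (∀ j ≤ m - 1, f^[j] 0 = x₀ j) ∧ (∀ j ≤ m - 1, f^[j] 1 = x₁ j) ∧
    f^[m - 1] 0 = c ∧ f^[m - 1] 1 = c :=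
  thurston_fixed_point_realizes_combinatorics_general c f f₀ f₁ hfl hfr w₀ w₁ m x₀ x₁ hx₀0 hx₁0
    hx₀last hx₁last hpull₀ hpull₁
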